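/- Fix h > 0 and Γ ≥ 0, and let p = ln(2 cosh(βΓ)). The supremum over y ∈ [0,1] of F(y) = β·h·γ(y) + (1−y)·p, where γ : [0,1] → [0,1] is the inverse of γ⁻¹(x) = ((1−x)/(2 ln 2))ln(1−x) + ((1+x)/(2 ln 2))ln(1+x), is attained at the unique point y* = k(p/(βh)), where k is the inverse of γ′. -/

import Mathlib

open Real Set

/-- `γ⁻¹(x) = ((1−x)/(2 ln 2))·ln(1−x) + ((1+x)/(2 ln 2))·ln(1+x)`. -/
noncomputable def gammaInv (x : ℝ) : ℝ :=
  (1 - x) / (2 * Real.log 2) * Real.log (1 - x)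
    + (1 + x) / (2 * Real.log 2) * Real.log (1 + x)

/-- The inverse `k` of `γ'`: `k(0) = 1`,
`k(x) = (1/x)·tanh((ln 2)/x) − (1/ln 2)·ln cosh((ln 2)/x)` for `x > 0`. -/
noncomputable def kFun (x : ℝ) : ℝ :=
  if x = 0 then 1
  else (1 / x) * Real.tanh (Real.log 2 / x) - (1 / Real.log 2) * Real.log (Real.cosh (Real.log 2 / x))

/-!
Substituting `y = γ⁻¹(x)` turns `F` into `p − βh·(a·γ⁻¹(x) − x)` with `a = p/(βh) > 0`.
Since `(γ⁻¹)' = artanh / ln 2` is strictly increasing, `γ⁻¹` is strictly convex on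
`[-1, 1]`, so `a·γ⁻¹(x) − x` has a unique minimiser, its critical point
`x₀ = tanh (ln 2 / a)`. Writing `γ⁻¹(tanh t)` in closed form shows `γ⁻¹(x₀) = k(a)`.
-/

theorem StrictConvexOn.add_mul_sub_lt_of_hasDerivAt {S : Set ℝ} {f : ℝ → ℝ} {f' x y : ℝ}
    (hf : StrictConvexOn ℝ S f) (hx : x ∈ S) (hy : y ∈ S) (hne : y ≠ x)
    (hf' : HasDerivAt f f' x) : f x + f' * (y - x) < f y := by
  rcases hne.lt_or_gt with hyx | hxy
  · have := hf.slope_lt_of_hasDerivAt hy hx hyx hf'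
    rw [slope_def_field, div_lt_iff₀ (sub_pos.2 hyx)] at this
    linarith
  · have := hf.lt_slope_of_hasDerivAt hx hy hxy hf'
    rw [slope_def_field, lt_div_iff₀ (sub_pos.2 hxy)] at this
    linarith

namespace Real

theorem one_sub_tanh (t : ℝ) : 1 - tanh t = exp (-t) / cosh t := by
  rw [tanh_eq_sinh_div_cosh, one_sub_div (cosh_pos t).ne', cosh_eq, sinh_eq]
  ring

theorem one_add_tanh (t : ℝ) : 1 + tanh t = exp t / cosh t := by
  rw [tanh_eq_sinh_div_cosh, one_add_div (cosh_pos t).ne', cosh_eq, sinh_eq]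
  ring

theorem log_one_sub_tanh (t : ℝ) : log (1 - tanh t) = -t - log (cosh t) := by
  rw [one_sub_tanh, log_div (exp_ne_zero _) (cosh_pos t).ne', log_exp]

theorem log_one_add_tanh (t : ℝ) : log (1 + tanh t) = t - log (cosh t) := by
  rw [one_add_tanh, log_div (exp_ne_zero _) (cosh_pos t).ne', log_exp]

theorem tanh_nonneg {t : ℝ} (ht : 0 ≤ t) : 0 ≤ tanh t := by
  rw [tanh_eq_sinh_div_cosh]
  exact div_nonneg (sinh_nonneg_iff.2 ht) (cosh_pos t).le

end Real

theorem gammaInv_eq (x : ℝ) :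
    gammaInv x = ((1 - x) * log (1 - x) + (1 + x) * log (1 + x)) / (2 * log 2) := by
  unfold gammaInv
  ring

theorem continuous_gammaInv : Continuous gammaInv := by
  simp only [funext gammaInv_eq]
  exact ((continuous_mul_log.comp (continuous_const.sub continuous_id)).add
    (continuous_mul_log.comp (continuous_const.add continuous_id))).div_const _

theorem gammaInv_zero : gammaInv 0 = 0 := by
  simp [gammaInv]

theorem gammaInv_one : gammaInv 1 = 1 := by
  have : log 2 ≠ 0 := (log_pos one_lt_two).ne'
  norm_num [gammaInv]
  field_simp

theorem gammaInv_tanh (t : ℝ) : gammaInv (tanh t) = (t * tanh t - log (cosh t)) / log 2 := by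
  have : log 2 ≠ 0 := (log_pos one_lt_two).ne'
  rw [gammaInv_eq, log_one_sub_tanh, log_one_add_tanh]
  field_simp
  ring

theorem kFun_eq_gammaInv_tanh {a : ℝ} (ha : a ≠ 0) : kFun a = gammaInv (tanh (log 2 / a)) := by
  have : log 2 ≠ 0 := (log_pos one_lt_two).ne'
  rw [kFun, if_neg ha, gammaInv_tanh]
  field_simp

theorem hasDerivAt_gammaInv {x : ℝ} (hx : x ∈ Ioo (-1) 1) :
    HasDerivAt gammaInv (artanh x / log 2) x := by
  have h₁ : 0 < 1 - x := by linarith [hx.2]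
  have h₂ : 0 < 1 + x := by linarith [hx.1]
  have hsub := (hasDerivAt_mul_log h₁.ne').comp x ((hasDerivAt_id x).const_sub 1)
  have hadd := (hasDerivAt_mul_log h₂.ne').comp x ((hasDerivAt_id x).const_add 1)
  rw [funext gammaInv_eq]
  refine ((hsub.add hadd).div_const (2 * log 2)).congr_deriv ?_
  rw [artanh_eq_half_log (Ioo_subset_Icc_self hx), log_div h₂.ne' h₁.ne']
  ring

theorem hasDerivAt_gammaInv_tanh (t : ℝ) : HasDerivAt gammaInv (t / log 2) (tanh t) := by
  simpa [artanh_tanh] using hasDerivAt_gammaInv ⟨neg_one_lt_tanh t, tanh_lt_one t⟩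

theorem strictConvexOn_gammaInv : StrictConvexOn ℝ (Icc (-1) 1) gammaInv := by
  refine StrictMonoOn.strictConvexOn_of_deriv (convex_Icc _ _)
    continuous_gammaInv.continuousOn ?_
  rw [interior_Icc]
  intro x hx y hy hxy
  rw [(hasDerivAt_gammaInv hx).deriv, (hasDerivAt_gammaInv hy).deriv]
  exact div_lt_div_of_pos_right (strictMonoOn_artanh hx hy hxy) (log_pos one_lt_two)

theorem monotoneOn_gammaInv : MonotoneOn gammaInv (Icc 0 1) := by
  refine monotoneOn_of_deriv_nonneg (convex_Icc 0 1) continuous_gammaInv.continuousOn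
    (fun x hx => ?_) fun x hx => ?_ <;> rw [interior_Icc] at hx
  all_goals have hx' : x ∈ Ioo (-1) 1 := ⟨by linarith [hx.1], hx.2⟩
  · exact (hasDerivAt_gammaInv hx').differentiableAt.differentiableWithinAt
  · rw [(hasDerivAt_gammaInv hx').deriv]
    exact div_nonneg (artanh_nonneg hx.1.le) (log_pos one_lt_two).le

theorem image_gammaInv_Icc : gammaInv '' Icc 0 1 = Icc 0 1 := by
  simpa [gammaInv_zero, gammaInv_one] using
    continuous_gammaInv.continuousOn.image_Icc_of_monotoneOn zero_le_one monotoneOn_gammaInv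

theorem mul_gammaInv_tanh_sub_lt {a x : ℝ} (ha : 0 < a) (hx : x ∈ Icc (-1) 1)
    (hne : x ≠ tanh (log 2 / a)) :
    a * gammaInv (tanh (log 2 / a)) - tanh (log 2 / a) < a * gammaInv x - x := by
  have hL : log 2 ≠ 0 := (log_pos one_lt_two).ne'
  have tangent := strictConvexOn_gammaInv.add_mul_sub_lt_of_hasDerivAt
    ⟨(neg_one_lt_tanh _).le, (tanh_lt_one _).le⟩ hx hne (hasDerivAt_gammaInv_tanh _)
  rw [div_div_cancel_left' hL] at tangent
  have := mul_lt_mul_of_pos_left tangent ha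
  rw [mul_add, ← mul_assoc, mul_inv_cancel₀ ha.ne', one_mul] at this
  linarith

theorem sup_attained_at_kFun_general
    (β h Γ : ℝ) (hβ : 0 < β) (hh : 0 < h)
    (γ : ℝ → ℝ)
    (hγ₁ : ∀ x ∈ Icc (0 : ℝ) 1, γ (gammaInv x) = x) :
    let p : ℝ := Real.log (2 * Real.cosh (β * Γ))
    let F : ℝ → ℝ := fun y => β * h * γ y + (1 - y) * p
    let ystar : ℝ := kFun (p / (β * h))
    ystar ∈ Icc (0 : ℝ) 1 ∧
    (∀ y ∈ Icc (0 : ℝ) 1, F y ≤ F ystar) ∧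
    (∀ y ∈ Icc (0 : ℝ) 1, (∀ z ∈ Icc (0 : ℝ) 1, F z ≤ F y) → y = ystar) := by
  intro p F ystar
  have hp : 0 < p := log_pos (by linarith [one_le_cosh (β * Γ)])
  have hβh : 0 < β * h := mul_pos hβ hh
  set a := p / (β * h)
  have ha : 0 < a := div_pos hp hβh
  set x₀ := tanh (log 2 / a)
  have hx₀ : x₀ ∈ Icc 0 1 :=
    ⟨tanh_nonneg (div_pos (log_pos one_lt_two) ha).le, (tanh_lt_one _).le⟩
  have hystar : ystar = gammaInv x₀ := kFun_eq_gammaInv_tanh ha.ne'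
  have hystar_mem : ystar ∈ Icc 0 1 := image_gammaInv_Icc ▸ hystar ▸ mem_image_of_mem _ hx₀
  have hF : ∀ x ∈ Icc 0 1, F (gammaInv x) = p - β * h * (a * gammaInv x - x) := by
    intro x hx
    simp only [F, hγ₁ x hx, a]
    field_simp
    ring
  have hF_lt : ∀ x ∈ Icc 0 1, x ≠ x₀ → F (gammaInv x) < F ystar := by
    intro x hx hne
    rw [hF x hx, hystar, hF x₀ hx₀]
    exact sub_lt_sub_left (mul_lt_mul_of_pos_left
      (mul_gammaInv_tanh_sub_lt ha ⟨by linarith [hx.1], hx.2⟩ hne) hβh) p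
  refine ⟨hystar_mem, fun y hy => ?_, fun y hy hmax => ?_⟩ <;>
    obtain ⟨x, hx, rfl⟩ := image_gammaInv_Icc.symm ▸ hy
  · rcases eq_or_ne x x₀ with rfl | hne
    · rw [hystar]
    · exact (hF_lt x hx hne).le
  · by_contra hne
    exact (hF_lt x hx (by rintro rfl; exact hne hystar.symm)).not_ge (hmax _ hystar_mem)

/-- For `h > 0`, `Γ ≥ 0`, `β > 0` and `p = ln(2 cosh(βΓ))`, the supremum over `y ∈ [0,1]` of
`F(y) = βhγ(y) + (1−y)p` is attained at the unique point `y* = k(p/(βh))`. -/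
theorem sup_attained_at_kFun
    (β h Γ : ℝ) (hβ : 0 < β) (hh : 0 < h) (hΓ : 0 ≤ Γ)
    (γ : ℝ → ℝ)
    (hγ₁ : ∀ x ∈ Icc (0 : ℝ) 1, γ (gammaInv x) = x)
    (hγ₂ : ∀ y ∈ Icc (0 : ℝ) 1, gammaInv (γ y) = y) :
    let p : ℝ := Real.log (2 * Real.cosh (β * Γ))
    let F : ℝ → ℝ := fun y => β * h * γ y + (1 - y) * p
    let ystar : ℝ := kFun (p / (β * h))
    ystar ∈ Icc (0 : ℝ) 1 ∧
    (∀ y ∈ Icc (0 : ℝ) 1, F y ≤ F ystar) ∧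
    (∀ y ∈ Icc (0 : ℝ) 1, (∀ z ∈ Icc (0 : ℝ) 1, F z ≤ F y) → y = ystar) :=
  sup_attained_at_kFun_general β h Γ hβ hh γ hγ₁
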